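/- There is a constant C > 0 depending only on K such that every axis-parallel unit cube Q ⊂ ℝ^{#S} contains at most C points of any translate of Log(O_K^×), where Log(u) = (d_ν log|ι_ν(u)|)_{ν∈S}. More precisely, the bound #(translate of Log(O_K^×) ∩ Q) ≤ √2 / R_K + O_K(1) holds, where R_K is the regulator of K. -/

import Mathlib

/-!
Fix one point `x₀` of the translate inside the cube. Subtracting it sends every such point to
an element of `Log(𝓞_K^×)` of sup norm at most `1`, and this map is injective. Since
`Log(𝓞_K^×)` lies in the hyperplane `∑ z_ν = 0`, dropping the coordinate at one place `w₀`
keeps it injective and lands in `unitLattice K`, which is discrete: only finitely many of its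
points lie in the closed unit ball, and their number bounds the count uniformly.
-/

open NumberField NumberField.InfinitePlace

noncomputable section

namespace RogersNF

variable (K : Type) [Field K] [NumberField K]

/-- The logarithmic embedding `Log(u) = (d_ν log|ι_ν(u)|)_{ν ∈ S}` of the units. -/
def logEmb (u : (𝓞 K)ˣ) : InfinitePlace K → ℝ :=
  fun w => (w.mult : ℝ) * Real.log (w (algebraMap (𝓞 K) K (u : 𝓞 K)))

theorem _root_.Fintype.eq_of_sum_eq_of_forall_ne_eq {ι M : Type*} [Fintype ι]
    [AddCommGroup M] (i₀ : ι) {x y : ι → M} (hsum : ∑ i, x i = ∑ i, y i)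
    (hne : ∀ i ≠ i₀, x i = y i) : x = y := by
  have hi₀ : x i₀ - y i₀ = 0 := by
    rw [← Fintype.sum_eq_single i₀ fun i hi => sub_eq_zero.2 (hne i hi),
      Finset.sum_sub_distrib, hsum, sub_self]
  funext i
  by_cases hi : i = i₀
  · exact hi ▸ sub_eq_zero.1 hi₀
  · exact hne i hi

theorem norm_sub_comp_le_one_of_mem_cube {ι κ : Type*} [Fintype κ] (f : κ → ι)
    {v x y : ι → ℝ} (hx : ∀ i, v i ≤ x i ∧ x i ≤ v i + 1)
    (hy : ∀ i, v i ≤ y i ∧ y i ≤ v i + 1) :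
    ‖(x - y) ∘ f‖ ≤ 1 := by
  refine (pi_norm_le_iff_of_nonneg zero_le_one).2 fun k => ?_
  simpa [Real.dist_eq] using Real.dist_le_of_mem_Icc (hx (f k)) (hy (f k))

namespace logEmb

open NumberField.Units NumberField.Units.dirichletUnitTheorem

theorem sum_eq_zero (u : (𝓞 K)ˣ) : ∑ w, logEmb K u w = 0 :=
  sum_mult_mul_log u

theorem sum_add_eq (t : InfinitePlace K → ℝ) (u : (𝓞 K)ˣ) :
    ∑ w, (t + logEmb K u) w = ∑ w, t w := by
  simp only [Pi.add_apply, Finset.sum_add_distrib, sum_eq_zero, add_zero]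

theorem div {K : Type} [Field K] (u u' : (𝓞 K)ˣ) :
    logEmb K (u / u') = logEmb K u - logEmb K u' := by
  have hcoe : ((u / u' : (𝓞 K)ˣ) : K) = u / u' := by
    rw [div_eq_mul_inv, coe_mul, ← zpow_neg_one, coe_zpow, zpow_neg_one, div_eq_mul_inv]
  funext w
  simp only [logEmb, Pi.sub_apply, ← mul_sub]
  rw [← Real.log_div (Units.pos_at_place u w).ne' (Units.pos_at_place u' w).ne', ← map_div₀]
  exact congrArg (fun z => (w.mult : ℝ) * Real.log (w z)) hcoe

theorem sub_comp_val_mem_unitLattice (u u' : (𝓞 K)ˣ) :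
    (logEmb K u - logEmb K u') ∘ Subtype.val ∈ unitLattice K := by
  rw [← div]
  exact ⟨Additive.ofMul (u / u'), Submodule.mem_top, rfl⟩

end logEmb

def translateInterCube (t v : InfinitePlace K → ℝ) : Set (InfinitePlace K → ℝ) :=
  {x | (∃ u : (𝓞 K)ˣ, x = t + logEmb K u) ∧ ∀ w, v w ≤ x w ∧ x w ≤ v w + 1}

open NumberField.Units NumberField.Units.dirichletUnitTheorem in
open scoped Classical in
theorem ncard_translateInterCube_le (t v : InfinitePlace K → ℝ) :
    (translateInterCube K t v).ncard ≤
      ((unitLattice K : Set (logSpace K)) ∩ Metric.closedBall 0 1).ncard := by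
  rcases (translateInterCube K t v).eq_empty_or_nonempty with h | ⟨x₀, ⟨u₀, rfl⟩, hx₀⟩
  · simp [h]
  refine Set.ncard_le_ncard_of_injOn (fun x => (x - (t + logEmb K u₀)) ∘ Subtype.val) ?_ ?_
    (unitLattice_inter_ball_finite K 1)
  · rintro _ ⟨⟨u, rfl⟩, hx⟩
    refine ⟨?_, mem_closedBall_zero_iff.2 (norm_sub_comp_le_one_of_mem_cube _ hx hx₀)⟩
    rw [add_sub_add_left_eq_sub]
    exact logEmb.sub_comp_val_mem_unitLattice K u u₀
  · rintro _ ⟨⟨u, rfl⟩, -⟩ _ ⟨⟨u', rfl⟩, -⟩ hxy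
    refine Fintype.eq_of_sum_eq_of_forall_ne_eq w₀ ?_ fun w hw => ?_
    · rw [logEmb.sum_add_eq, logEmb.sum_add_eq]
    · simpa using congrFun hxy ⟨w, hw⟩

open NumberField.Units NumberField.Units.dirichletUnitTheorem in
open scoped Classical in
/-- **Any translate of `Log(𝓞_K^×)` meets any axis-parallel unit cube of `ℝ^{#S}` in at most
`√2/R_K + O_K(1)` points, where `R_K` is the regulator.** -/
theorem card_units_in_cube :
    ∃ C : ℝ, 0 < C ∧
      (∃ C₂ : ℝ, C = Real.sqrt 2 / NumberField.Units.regulator K + C₂) ∧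
      ∀ t v : InfinitePlace K → ℝ,
        (Nat.card {x : InfinitePlace K → ℝ //
            (∃ u : (𝓞 K)ˣ, x = t + logEmb K u) ∧ ∀ w, v w ≤ x w ∧ x w ≤ v w + 1} : ℝ)
          ≤ C := by
  set N := ((unitLattice K : Set (logSpace K)) ∩ Metric.closedBall 0 1).ncard
  have hpos : 0 < Real.sqrt 2 / regulator K :=
    div_pos (Real.sqrt_pos.2 two_pos) (regulator_pos K)
  refine ⟨Real.sqrt 2 / regulator K + N, by positivity, ⟨N, rfl⟩, fun t v => ?_⟩
  calc _ ≤ (N : ℝ) := Nat.cast_le.2 (ncard_translateInterCube_le K t v)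
    _ ≤ _ := le_add_of_nonneg_left hpos.le

end RogersNF
end
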